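/- arXiv:2511.21680 — 3 statements merged into one kernel-verified Lean document; each statement's English description precedes it below -/
import Mathlib

section
/- Let δ₁ = 10⁻², δ₂ = 10⁻¹⁰, and m ∈ ℕ. Let s = (s₁, …, s_m) ∈ (ℝ/ℤ)^m satisfy: (i) there is an index i with ‖s_i + δ₁‖_{ℝ/ℤ} < 2δ₂; (ii) ‖s_j‖_{ℝ/ℤ} < 2δ₂ for all j ≠ i; (iii) δ₁ − 2δ₂ < Σ_{j≠i} ‖s_j‖_{ℝ/ℤ} < δ₁ + 2δ₂. Define f(x) = Σ_{j=1}^{m} (e^{2πi x_j} − 1) ∈ ℂ for x ∈ (ℝ/ℤ)^m. Then for every x ∈ (ℝ/ℤ)^m: 2δ₂ < |f(x) − 2f(x+s) + f(x+2s)| < 1/100. -/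
open Real

/-- `f x = ∑ j (e^{2πi x_j} - 1)`, well defined on the torus `(ℝ/ℤ)^m`. -/
noncomputable def torusF {m : ℕ} (x : Fin m → AddCircle (1 : ℝ)) : ℂ :=
  ∑ j, ((AddCircle.toCircle (x j) : ℂ) - 1)

lemma abs_one_sub_exp (x : ℝ) :
    norm (1 - Complex.exp (2 * π * x * Complex.I)) = 2 * |Real.sin (π * x)| := by
  have h : (1 : ℂ) - Complex.exp (2 * π * x * Complex.I) =
      -Complex.exp ((π * x : ℝ) * Complex.I) *
        (Complex.exp ((π * x : ℝ) * Complex.I) - Complex.exp (-((π * x : ℝ) * Complex.I))) := by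
    rw [show (2 * ↑π * ↑x * Complex.I : ℂ) = ((π * x : ℝ) * Complex.I) + ((π * x : ℝ) * Complex.I)
      by push_cast; ring]
    rw [neg_mul, mul_sub, ← Complex.exp_add, ← Complex.exp_add, add_neg_cancel,
      Complex.exp_zero]
    ring
  rw [h, norm_mul, norm_neg, Complex.norm_exp_ofReal_mul_I, one_mul]
  have h2 : Complex.exp ((π * x : ℝ) * Complex.I) - Complex.exp (-((π * x : ℝ) * Complex.I)) =
      2 * Complex.sin ((π * x : ℝ)) * Complex.I := by
    rw [Complex.sin]
    ring_nf
    rw [Complex.I_sq]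
    ring
  rw [h2, norm_mul, norm_mul, Complex.norm_I, mul_one, Complex.norm_two, ← Complex.ofReal_sin,
    Complex.norm_real, Real.norm_eq_abs]

lemma abs_one_sub_toCircle (u : AddCircle (1 : ℝ)) :
    norm (1 - (AddCircle.toCircle u : ℂ)) = 2 * Real.sin (π * ‖u‖) := by
  induction u using QuotientAddGroup.induction_on with
  | H x =>
    have hy : ((x - round x : ℝ) : AddCircle (1 : ℝ)) = (x : AddCircle (1 : ℝ)) := by
      rw [AddCircle.coe_sub, sub_eq_self, AddCircle.coe_eq_zero_iff]
      exact ⟨round x, by simp⟩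
    have hb : |x - round x| ≤ 1 / 2 := by
      simpa using abs_sub_round x
    have hnorm : ‖((x - round x : ℝ) : AddCircle (1 : ℝ))‖ = |x - round x| := by
      rw [AddCircle.norm_eq (1 : ℝ), inv_one, one_mul, mul_one, round_sub_intCast, sub_self,
        Int.cast_zero, sub_zero]
    set y : ℝ := x - round x with hydef
    rw [← hy, AddCircle.toCircle_apply_mk, Circle.coe_exp, hnorm]
    have harg : ((2 * π / 1 * y : ℝ) : ℂ) * Complex.I = 2 * (π : ℂ) * (y : ℂ) * Complex.I := by
      push_cast; ring
    rw [harg, abs_one_sub_exp]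
    congr 1
    rcases abs_cases y with ⟨h1, h2⟩ | ⟨h1, h2⟩
    · rw [h1, abs_of_nonneg]
      exact Real.sin_nonneg_of_nonneg_of_le_pi (by positivity)
        (by nlinarith [pi_pos, hb, abs_nonneg y, le_abs_self y])
    · rw [h1, mul_neg, Real.sin_neg, abs_of_nonpos]
      have h3 : Real.sin (-(π * y)) ≥ 0 := by
        rw [← mul_neg]
        exact Real.sin_nonneg_of_nonneg_of_le_pi (by nlinarith [pi_pos])
          (by nlinarith [pi_pos, hb, neg_le_abs y])
      rw [Real.sin_neg] at h3
      linarith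

lemma norm_le_half' (u : AddCircle (1 : ℝ)) : ‖u‖ ≤ 1 / 2 := by
  induction u using QuotientAddGroup.induction_on with
  | H x =>
    rw [AddCircle.norm_eq (1 : ℝ), mul_one, inv_one, one_mul]
    simpa using abs_sub_round x

lemma norm_coe_delta : ‖(((1:ℝ)/10^2 : ℝ) : AddCircle (1 : ℝ))‖ = 1/10^2 := by
  rw [AddCircle.norm_eq (1 : ℝ), mul_one, inv_one, one_mul]
  norm_num [round_eq]

lemma torusF_second_diff {m : ℕ} (x s : Fin m → AddCircle (1 : ℝ)) :
    torusF x - 2 * torusF (x + s) + torusF (x + 2 • s) =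
      ∑ j, (AddCircle.toCircle (x j) : ℂ) * (1 - (AddCircle.toCircle (s j) : ℂ)) ^ 2 := by
  unfold torusF
  rw [Finset.mul_sum, ← Finset.sum_sub_distrib, ← Finset.sum_add_distrib]
  refine Finset.sum_congr rfl fun j _ => ?_
  have hs1 : (x + s) j = x j + s j := rfl
  have hs2 : (x + 2 • s) j = x j + (s j + s j) := by
    simp [Pi.add_apply, Pi.smul_apply, two_smul]
  rw [hs1, hs2, AddCircle.toCircle_add, AddCircle.toCircle_add, AddCircle.toCircle_add]
  push_cast
  ring

set_option maxHeartbeats 1000000 in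
theorem second_difference_estimate (δ₁ δ₂ : ℝ) (hδ₁ : δ₁ = 1 / 10 ^ 2)
    (hδ₂ : δ₂ = 1 / 10 ^ 10) (m : ℕ) (s : Fin m → AddCircle (1 : ℝ)) (i : Fin m)
    (h1 : ‖s i + ((δ₁ : ℝ) : AddCircle (1 : ℝ))‖ < 2 * δ₂)
    (h2 : ∀ j, j ≠ i → ‖s j‖ < 2 * δ₂)
    (h3 : δ₁ - 2 * δ₂ < ∑ j ∈ Finset.univ.erase i, ‖s j‖)
    (h4 : (∑ j ∈ Finset.univ.erase i, ‖s j‖) < δ₁ + 2 * δ₂) :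
    ∀ x : Fin m → AddCircle (1 : ℝ),
      2 * δ₂ < ‖torusF x - 2 * torusF (x + s) + torusF (x + 2 • s)‖ ∧
      ‖torusF x - 2 * torusF (x + s) + torusF (x + 2 • s)‖ < 1 / 100 := by
  subst hδ₁ hδ₂
  intro x
  rw [torusF_second_diff]
  set g : Fin m → ℂ :=
    fun j => (AddCircle.toCircle (x j) : ℂ) * (1 - (AddCircle.toCircle (s j) : ℂ)) ^ 2 with hg
  have habs : ∀ j, norm (g j) = (2 * Real.sin (π * ‖s j‖)) ^ 2 := by
    intro j
    rw [hg]
    simp only [norm_mul, norm_pow]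
    rw [Circle.norm_coe, one_mul, abs_one_sub_toCircle]
  -- norm of δ₁ on the circle
  have hD : ‖(((1:ℝ)/10^2 : ℝ) : AddCircle (1 : ℝ))‖ = (1:ℝ)/10^2 := norm_coe_delta
  -- bounds on ‖s i‖
  have hti_ub : ‖s i‖ < (1:ℝ)/10^2 + 2 * (1/10^10) := by
    have h5 : s i = (s i + (((1:ℝ)/10^2 : ℝ) : AddCircle (1 : ℝ))) - (((1:ℝ)/10^2 : ℝ) : AddCircle (1 : ℝ)) := by
      abel
    calc ‖s i‖ = ‖(s i + (((1:ℝ)/10^2 : ℝ) : AddCircle (1 : ℝ))) - (((1:ℝ)/10^2 : ℝ) : AddCircle (1 : ℝ))‖ := by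
          rw [← h5]
      _ ≤ ‖s i + (((1:ℝ)/10^2 : ℝ) : AddCircle (1 : ℝ))‖ + ‖(((1:ℝ)/10^2 : ℝ) : AddCircle (1 : ℝ))‖ :=
          norm_sub_le _ _
      _ < (1:ℝ)/10^2 + 2 * (1/10^10) := by rw [hD]; linarith
  have hti_lb : (1:ℝ)/10^2 - 2 * (1/10^10) < ‖s i‖ := by
    have h5 := norm_sub_norm_le (((1:ℝ)/10^2 : ℝ) : AddCircle (1 : ℝ)) (s i + (((1:ℝ)/10^2 : ℝ) : AddCircle (1 : ℝ)))
    have h6 : (((1:ℝ)/10^2 : ℝ) : AddCircle (1 : ℝ)) - (s i + (((1:ℝ)/10^2 : ℝ) : AddCircle (1 : ℝ))) = -(s i) := by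
      abel
    rw [h6, norm_neg, hD] at h5
    linarith
  have hti0 : (0 : ℝ) ≤ ‖s i‖ := norm_nonneg _
  have hthalf : ‖s i‖ ≤ 1 / 2 := norm_le_half' _
  -- bound the term at i
  have hAi_lb : 16 * ‖s i‖ ^ 2 ≤ norm (g i) := by
    rw [habs i]
    have hle : π * ‖s i‖ ≤ π / 2 := by nlinarith [pi_pos]
    have := Real.mul_le_sin (x := π * ‖s i‖) (by positivity) hle
    have h7 : 2 / π * (π * ‖s i‖) = 2 * ‖s i‖ := by field_simp
    rw [h7] at this
    nlinarith [this, hti0]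
  have hAi_ub : norm (g i) ≤ 4 * π ^ 2 * ‖s i‖ ^ 2 := by
    rw [habs i]
    have hsle := Real.sin_le (x := π * ‖s i‖) (by positivity)
    have hs0 : 0 ≤ Real.sin (π * ‖s i‖) :=
      Real.sin_nonneg_of_nonneg_of_le_pi (by positivity) (by nlinarith [pi_pos])
    nlinarith [hsle, hs0]
  -- bound the sum of other terms
  set S : ℂ := ∑ j ∈ Finset.univ.erase i, g j with hS
  have hSb : norm S ≤ 8 * π ^ 2 * ((1:ℝ)/10^10) * ((1:ℝ)/10^2 + 2 * (1/10^10)) := by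
    calc norm S ≤ ∑ j ∈ Finset.univ.erase i, norm (g j) :=
          norm_sum_le _ _
      _ ≤ ∑ j ∈ Finset.univ.erase i, 8 * π ^ 2 * ((1:ℝ)/10^10) * ‖s j‖ := by
          refine Finset.sum_le_sum fun j hj => ?_
          have hjne : j ≠ i := (Finset.mem_erase.mp hj).1
          have htj := h2 j hjne
          have htj0 : (0 : ℝ) ≤ ‖s j‖ := norm_nonneg _
          rw [habs j]
          have hsle := Real.sin_le (x := π * ‖s j‖) (by positivity)
          have hs0 : 0 ≤ Real.sin (π * ‖s j‖) :=
            Real.sin_nonneg_of_nonneg_of_le_pi (by positivity)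
              (by nlinarith [pi_pos, norm_le_half' (s j)])
          have hsq : Real.sin (π * ‖s j‖) ^ 2 ≤ (π * ‖s j‖) ^ 2 := by nlinarith [hsle, hs0]
          nlinarith [hsq, sq_nonneg π, htj, htj0, mul_nonneg (mul_nonneg (sq_nonneg π) htj0)
            (sub_nonneg.2 htj.le)]
      _ = 8 * π ^ 2 * ((1:ℝ)/10^10) * ∑ j ∈ Finset.univ.erase i, ‖s j‖ := by
          rw [Finset.mul_sum]
      _ ≤ 8 * π ^ 2 * ((1:ℝ)/10^10) * ((1:ℝ)/10^2 + 2 * (1/10^10)) := by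
          have : (0:ℝ) ≤ 8 * π ^ 2 * ((1:ℝ)/10^10) := by positivity
          nlinarith [this, h4]
  have hsplit : ∑ j, g j = g i + S := by
    rw [hS, Finset.add_sum_erase _ g (Finset.mem_univ i)]
  rw [hsplit]
  have hpi2 : π ^ 2 < 9.9225 := by nlinarith [pi_gt_three, pi_lt_d2]
  have hpi2' : (9 : ℝ) < π ^ 2 := by nlinarith [pi_gt_three]
  have htri_lb : norm (g i) - norm S ≤ norm (g i + S) := by
    have h6 := norm_add_le (g i + S) (-S)
    rw [norm_neg, add_neg_cancel_right] at h6
    linarith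
  have htri_ub : norm (g i + S) ≤ norm (g i) + norm S :=
    norm_add_le _ _
  constructor
  · have h16 : 16 * ((1:ℝ)/10^2 - 2 * (1/10^10)) ^ 2 ≤ 16 * ‖s i‖ ^ 2 := by
      have : (0:ℝ) < (1:ℝ)/10^2 - 2 * (1/10^10) := by norm_num
      nlinarith [hti_lb, this]
    nlinarith [htri_lb, hAi_lb, hSb, h16, hpi2]
  · have hsq : ‖s i‖ ^ 2 ≤ ((1:ℝ)/10^2 + 2 * (1/10^10)) ^ 2 := by nlinarith [hti_ub, hti0]
    have h4p : 4 * π ^ 2 * ‖s i‖ ^ 2 ≤ 4 * π ^ 2 * ((1:ℝ)/10^2 + 2 * (1/10^10)) ^ 2 := by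
      nlinarith [hsq, sq_nonneg π]
    nlinarith [htri_ub, hAi_ub, hSb, h4p, hpi2, hpi2']
end

section
/- Let δ₁ = 10⁻², δ₂ = 10⁻¹⁰, m ∈ ℕ, and let S_m ⊆ (ℝ/ℤ)^m be the set of tuples s satisfying conditions (i)–(iii): some coordinate s_i has ‖s_i + δ₁‖_{ℝ/ℤ} < 2δ₂, all other coordinates satisfy ‖s_j‖_{ℝ/ℤ} < 2δ₂, and δ₁ − 2δ₂ < Σ_{j≠i}‖s_j‖_{ℝ/ℤ} < δ₁ + 2δ₂. Then there exists a coloring χ of (ℝ/ℤ)^m using finitely many colors (at most (⌈2/δ₂⌉)² colors) such that for all x ∈ (ℝ/ℤ)^m and s ∈ S_m, not all of χ(x), χ(x+s), χ(x+2s) are equal. -/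
open Real

/-- The set `S_m ⊆ (ℝ/ℤ)^m` from the construction, with parameters `δ₁, δ₂`. -/
def Sm (δ₁ δ₂ : ℝ) (m : ℕ) : Set (Fin m → AddCircle (1 : ℝ)) :=
  {s | ∃ i : Fin m,
    ‖s i + ((δ₁ : ℝ) : AddCircle (1 : ℝ))‖ < 2 * δ₂ ∧
    (∀ j, j ≠ i → ‖s j‖ < 2 * δ₂) ∧
    δ₁ - 2 * δ₂ < (∑ j ∈ Finset.univ.erase i, ‖s j‖) ∧
    (∑ j ∈ Finset.univ.erase i, ‖s j‖) < δ₁ + 2 * δ₂}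

lemma norm_one_sub_exp_aux (θ : ℝ) :
    ‖1 - Complex.exp (θ * Complex.I)‖ = 2 * |Real.sin (θ/2)| := by
  have hs := Real.sin_sq_eq_half_sub (θ/2)
  rw [show 2*(θ/2) = θ by ring] at hs
  have h2 : ‖1 - Complex.exp (θ * Complex.I)‖^2 = (2 * |Real.sin (θ/2)|)^2 := by
    rw [Complex.sq_norm, Complex.normSq_apply, Complex.exp_mul_I]
    simp [Complex.cos_ofReal_re, Complex.sin_ofReal_re]
    rw [mul_pow, sq_abs]
    nlinarith [Real.sin_sq_add_cos_sq θ]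
  have h3 := norm_nonneg (1 - Complex.exp (θ * Complex.I))
  have h4 : (0:ℝ) ≤ 2 * |Real.sin (θ/2)| := by positivity
  nlinarith

lemma norm_one_sub_toCircle (t : AddCircle (1:ℝ)) :
    4 * ‖t‖ ≤ ‖1 - (AddCircle.toCircle t : ℂ)‖ ∧
      ‖1 - (AddCircle.toCircle t : ℂ)‖ ≤ 2 * π * ‖t‖ := by
  obtain ⟨x⟩ := t
  set y : ℝ := x - round x with hy
  have hy2 : |y| ≤ 1/2 := abs_sub_round x
  have hxy : (x : AddCircle (1:ℝ)) = (y : AddCircle (1:ℝ)) := by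
    have h0 : ((round x : ℝ) : AddCircle (1:ℝ)) = 0 := by
      rw [QuotientAddGroup.eq_zero_iff]; exact AddSubgroup.intCast_mem_zmultiples_one _
    rw [hy, sub_eq_add_neg]
    simp only [QuotientAddGroup.mk_add, QuotientAddGroup.mk_neg, h0]
    simp
  have hnorm : ‖(x : AddCircle (1:ℝ))‖ = |y| := by
    rw [hxy, AddCircle.norm_coe_eq_abs_iff _ one_ne_zero]; simpa using hy2
  have htc : (AddCircle.toCircle ((x : AddCircle (1:ℝ))) : ℂ)
      = Complex.exp (((2*π/1*y : ℝ):ℂ) * Complex.I) := by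
    rw [hxy, AddCircle.toCircle_apply_mk, Circle.coe_exp]
  show 4 * ‖(x : AddCircle (1:ℝ))‖ ≤ ‖1 - (AddCircle.toCircle ((x : AddCircle (1:ℝ))) : ℂ)‖ ∧
    ‖1 - (AddCircle.toCircle ((x : AddCircle (1:ℝ))) : ℂ)‖ ≤ 2 * π * ‖(x : AddCircle (1:ℝ))‖
  rw [hnorm, htc, norm_one_sub_exp_aux, show (2*π/1*y)/2 = π * y by ring]
  have habs : |Real.sin (π*y)| = Real.sin (π * |y|) := by
    rcases abs_cases y with ⟨h1, h2⟩ | ⟨h1, h2⟩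
    · rw [h1, abs_of_nonneg (Real.sin_nonneg_of_nonneg_of_le_pi (by positivity)
        (by nlinarith [Real.pi_pos]))]
    · have hneg : Real.sin (π * y) ≤ 0 := by
        have h3 : (0:ℝ) ≤ π * -y := by nlinarith [Real.pi_pos]
        have h4 : π * -y ≤ π := by nlinarith [Real.pi_pos]
        have h5 := Real.sin_nonneg_of_nonneg_of_le_pi h3 h4
        rw [show π * -y = -(π*y) by ring, Real.sin_neg] at h5
        linarith
      rw [h1, abs_of_nonpos hneg, show π * -y = -(π*y) by ring, Real.sin_neg]
  constructor
  · rw [habs]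
    have := Real.mul_le_sin (x := π * |y|) (by positivity) (by nlinarith [Real.pi_pos])
    have hπ := Real.pi_pos
    rw [show 2/π * (π * |y|) = 2 * |y| by field_simp] at this
    linarith
  · have := Real.abs_sin_le_abs (x := π * y)
    rw [abs_mul, abs_of_pos Real.pi_pos] at this
    linarith

noncomputable def col (K : ℕ) (hK : 0 < K) (r : ℝ) : Fin K :=
  ⟨⌊Int.fract r * (K:ℝ)⌋₊, by
    have hKR : (0:ℝ) < (K:ℝ) := Nat.cast_pos.mpr hK
    have h1 : Int.fract r * (K:ℝ) < (K:ℝ) := by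
      nlinarith [Int.fract_lt_one r, Int.fract_nonneg r]
    have h0 : (0:ℝ) ≤ Int.fract r * (K:ℝ) := mul_nonneg (Int.fract_nonneg r) hKR.le
    exact Nat.floor_lt h0 |>.mpr h1⟩

lemma col_eq {K : ℕ} (hK : 0 < K) {a b : ℝ} (h : col K hK a = col K hK b) :
    ∃ n : ℤ, |a - b - n| < 1 / K := by
  refine ⟨⌊a⌋ - ⌊b⌋, ?_⟩
  have hab : a - b - (↑(⌊a⌋ - ⌊b⌋) : ℝ) = Int.fract a - Int.fract b := by
    push_cast; unfold Int.fract; ring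
  rw [hab]
  have h' : ⌊Int.fract a * (K:ℝ)⌋₊ = ⌊Int.fract b * (K:ℝ)⌋₊ := congrArg Fin.val h
  have hKR : (0:ℝ) < (K:ℝ) := Nat.cast_pos.mpr hK
  have h1 : Int.fract a * (K:ℝ) < ⌊Int.fract a * (K:ℝ)⌋₊ + 1 := Nat.lt_floor_add_one _
  have h2 : Int.fract b * (K:ℝ) < ⌊Int.fract b * (K:ℝ)⌋₊ + 1 := Nat.lt_floor_add_one _
  have h3 : (⌊Int.fract a * (K:ℝ)⌋₊ : ℝ) ≤ Int.fract a * (K:ℝ) :=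
    Nat.floor_le (mul_nonneg (Int.fract_nonneg a) hKR.le)
  have h4 : (⌊Int.fract b * (K:ℝ)⌋₊ : ℝ) ≤ Int.fract b * (K:ℝ) :=
    Nat.floor_le (mul_nonneg (Int.fract_nonneg b) hKR.le)
  rw [h'] at h1 h3
  have hinv : (1/(K:ℝ)) * (K:ℝ) = 1 := by field_simp
  rw [abs_lt]
  constructor <;> nlinarith

set_option maxHeartbeats 1000000 in
theorem coloring_without_mono_three_AP (δ₁ δ₂ : ℝ) (hδ₁ : δ₁ = 1 / 10 ^ 2)
    (hδ₂ : δ₂ = 1 / 10 ^ 10) (m : ℕ) :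
    ∃ (N : ℕ) (χ : (Fin m → AddCircle (1 : ℝ)) → Fin N),
      N ≤ (⌈2 / δ₂⌉₊) ^ 2 ∧
      ∀ x : Fin m → AddCircle (1 : ℝ), ∀ s ∈ Sm δ₁ δ₂ m,
        ¬(χ x = χ (x + s) ∧ χ x = χ (x + 2 • s)) := by
  set K : ℕ := 10 ^ 10 with hKdef
  have hK : 0 < K := by norm_num
  have hKδ : (1:ℝ) / (K:ℝ) = δ₂ := by rw [hδ₂, hKdef]; push_cast; norm_num
  set F : (Fin m → AddCircle (1:ℝ)) → ℂ :=
    fun x => ∑ j, ((AddCircle.toCircle (x j) : ℂ) - 1) with hF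
  refine ⟨K * K, fun x => finProdFinEquiv (col K hK (F x).re, col K hK (F x).im), ?_, ?_⟩
  · have hC : (⌈2 / δ₂⌉₊) = 2 * 10 ^ 10 := by rw [hδ₂]; norm_num
    rw [hC, hKdef]; norm_num
  intro x s hs ⟨hA, hB⟩
  obtain ⟨i, hsi, hsj, hsum1, hsum2⟩ := hs
  -- extract component equalities
  have hA' := Prod.ext_iff.mp (finProdFinEquiv.injective hA)
  have hB' := Prod.ext_iff.mp (finProdFinEquiv.injective hB)
  obtain ⟨n₁, hn₁⟩ := col_eq hK hA'.1
  obtain ⟨m₁, hm₁⟩ := col_eq hK hA'.2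
  obtain ⟨n₂, hn₂⟩ := col_eq hK (hA'.1.symm.trans hB'.1)
  obtain ⟨m₂, hm₂⟩ := col_eq hK (hA'.2.symm.trans hB'.2)
  rw [hKδ] at hn₁ hm₁ hn₂ hm₂
  -- the second difference
  set D : ℂ := F x - 2 * F (x + s) + F (x + 2 • s) with hDdef
  have hD : D = ∑ j, (AddCircle.toCircle (x j) : ℂ)
      * (1 - (AddCircle.toCircle (s j) : ℂ))^2 := by
    rw [hDdef, hF]
    simp only
    rw [Finset.mul_sum, ← Finset.sum_sub_distrib, ← Finset.sum_add_distrib]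
    apply Finset.sum_congr rfl
    intro j _
    have h1 : (x + s) j = x j + s j := rfl
    have h2 : (x + 2 • s) j = x j + (s j + s j) := by simp [two_smul]
    rw [h1, h2, AddCircle.toCircle_add, AddCircle.toCircle_add, AddCircle.toCircle_add]
    push_cast
    ring
  have hz : ∀ t : AddCircle (1:ℝ), ‖(AddCircle.toCircle t : ℂ)‖ = 1 := fun t => Circle.norm_coe _
  -- split off coordinate i
  set f : Fin m → ℂ := fun j => (AddCircle.toCircle (x j) : ℂ)
    * (1 - (AddCircle.toCircle (s j) : ℂ))^2 with hf
  have hsplit : D = f i + ∑ j ∈ Finset.univ.erase i, f j := by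
    rw [hD]; exact (Finset.add_sum_erase _ f (Finset.mem_univ i)).symm
  have hfi : ‖f i‖ = ‖1 - (AddCircle.toCircle (s i) : ℂ)‖^2 := by
    rw [hf]; simp only; rw [norm_mul, norm_pow, hz, one_mul]
  -- bound on the rest
  have hterm : ∀ j ∈ Finset.univ.erase i, ‖f j‖ ≤ (2*π)^2*(2*δ₂) * ‖s j‖ := by
    intro j hj
    rw [hf]; simp only; rw [norm_mul, norm_pow, hz, one_mul]
    have h1 := (norm_one_sub_toCircle (s j)).2
    have h2 := hsj j (Finset.ne_of_mem_erase hj)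
    have h3 := norm_nonneg (s j)
    have h4 := norm_nonneg (1 - (AddCircle.toCircle (s j) : ℂ))
    have hπ := Real.pi_pos
    have h5 : ‖1 - (AddCircle.toCircle (s j) : ℂ)‖^2 ≤ (2*π*‖s j‖)^2 :=
      pow_le_pow_left₀ h4 h1 2
    have h6 : (2*π)^2*‖s j‖*‖s j‖ ≤ (2*π)^2*‖s j‖*(2*δ₂) :=
      mul_le_mul_of_nonneg_left h2.le (by positivity)
    nlinarith [h5, h6]
  have hδ₂pos : (0:ℝ) < δ₂ := by rw [hδ₂]; norm_num
  have hrest : ‖∑ j ∈ Finset.univ.erase i, f j‖ ≤ (2*π)^2*(2*δ₂) * (δ₁ + 2*δ₂) := by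
    calc ‖∑ j ∈ Finset.univ.erase i, f j‖ ≤ ∑ j ∈ Finset.univ.erase i, ‖f j‖ :=
          norm_sum_le _ _
      _ ≤ ∑ j ∈ Finset.univ.erase i, (2*π)^2*(2*δ₂) * ‖s j‖ := Finset.sum_le_sum hterm
      _ = (2*π)^2*(2*δ₂) * ∑ j ∈ Finset.univ.erase i, ‖s j‖ := by rw [← Finset.mul_sum]
      _ ≤ (2*π)^2*(2*δ₂) * (δ₁ + 2*δ₂) := by
          have hπ := Real.pi_pos
          have hc : (0:ℝ) ≤ (2*π)^2*(2*δ₂) := by positivity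
          nlinarith
  -- bounds on ‖s i‖
  have hδ₁n : ‖((δ₁ : ℝ) : AddCircle (1:ℝ))‖ = δ₁ := by
    have h := (AddCircle.norm_coe_eq_abs_iff (x := δ₁) _ one_ne_zero).mpr
      (by rw [hδ₁, abs_of_nonneg (by norm_num : (0:ℝ) ≤ 1/10^2)]; norm_num)
    rw [h, abs_of_pos (by rw [hδ₁]; norm_num)]
  have hsi_lb : δ₁ - 2*δ₂ ≤ ‖s i‖ := by
    have h := norm_sub_le (s i + ((δ₁ : ℝ) : AddCircle (1:ℝ))) (s i)
    rw [add_sub_cancel_left, hδ₁n] at h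
    linarith
  have hsi_ub : ‖s i‖ ≤ δ₁ + 2*δ₂ := by
    have h := norm_sub_le (s i + ((δ₁ : ℝ) : AddCircle (1:ℝ))) ((δ₁ : ℝ) : AddCircle (1:ℝ))
    rw [add_sub_cancel_right, hδ₁n] at h
    linarith
  set u : ℝ := ‖1 - (AddCircle.toCircle (s i) : ℂ)‖ with hu
  have hu_lb : 4*(δ₁ - 2*δ₂) ≤ u := by
    have h := (norm_one_sub_toCircle (s i)).1
    linarith
  have hu_ub : u ≤ 2*π*(δ₁ + 2*δ₂) := by
    have h := (norm_one_sub_toCircle (s i)).2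
    have hπ := Real.pi_pos
    nlinarith
  set r : ℝ := ‖D‖ with hr
  have hr_lb : u^2 - (2*π)^2*(2*δ₂) * (δ₁ + 2*δ₂) ≤ r := by
    have h1 : f i = D - ∑ j ∈ Finset.univ.erase i, f j := by rw [hsplit]; ring
    have h2 : ‖f i‖ ≤ r + ‖∑ j ∈ Finset.univ.erase i, f j‖ := by
      rw [h1]; exact norm_sub_le _ _
    rw [hfi] at h2
    linarith
  have hr_ub : r ≤ u^2 + (2*π)^2*(2*δ₂) * (δ₁ + 2*δ₂) := by
    have h2 : r ≤ ‖f i‖ + ‖∑ j ∈ Finset.univ.erase i, f j‖ := by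
      rw [hr, hsplit]; exact norm_add_le _ _
    rw [hfi] at h2
    linarith
  -- numeric bounds on r
  have hπ1 : π < 3.15 := Real.pi_lt_d2
  have hπ2 : 3.14 < π := by linarith [Real.pi_gt_d6]
  have hπsq : (2*π)^2 ≤ 39.7 := by nlinarith
  have hP : (2*π)^2*(2*δ₂) * (δ₁ + 2*δ₂) ≤ 1/10^9 := by
    have h1 : (2*π)^2*(2*δ₂) * (δ₁ + 2*δ₂) = (2*π)^2*((2*δ₂) * (δ₁ + 2*δ₂)) := by ring
    have h2 : (0:ℝ) ≤ (2*δ₂)*(δ₁+2*δ₂) := by rw [hδ₁, hδ₂]; norm_num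
    have h3 := mul_le_mul_of_nonneg_right hπsq h2
    rw [h1]
    rw [hδ₁, hδ₂] at h3 ⊢
    norm_num at h3 ⊢
    linarith
  have hPnn : (0:ℝ) ≤ (2*π)^2*(2*δ₂) * (δ₁ + 2*δ₂) := by positivity
  have key1 : (0.0015:ℝ) < r := by
    have hsq : (4*(δ₁ - 2*δ₂))^2 ≤ u^2 := by
      apply pow_le_pow_left₀ _ hu_lb
      rw [hδ₁, hδ₂]; norm_num
    rw [hδ₁, hδ₂] at hsq
    norm_num at hsq
    linarith
  have key2 : r < 0.004 := by
    have hsq : u^2 ≤ (2*π*(δ₁ + 2*δ₂))^2 := by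
      apply pow_le_pow_left₀ (norm_nonneg _) hu_ub
    have h1 : (2*π*(δ₁+2*δ₂))^2 = (2*π)^2 * (δ₁+2*δ₂)^2 := by ring
    have h2 : (2*π)^2*(δ₁+2*δ₂)^2 ≤ 39.7 * (δ₁+2*δ₂)^2 :=
      mul_le_mul_of_nonneg_right hπsq (sq_nonneg _)
    rw [h1] at hsq
    rw [hδ₁, hδ₂] at hsq h2
    norm_num at hsq h2
    linarith
  -- integers must vanish
  have hDre : D.re = ((F x).re - (F (x+s)).re) - ((F (x+s)).re - (F (x+2•s)).re) := by
    rw [hDdef]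
    simp [Complex.sub_re, Complex.add_re, Complex.mul_re]
    ring
  have hDim : D.im = ((F x).im - (F (x+s)).im) - ((F (x+s)).im - (F (x+2•s)).im) := by
    rw [hDdef]
    simp [Complex.sub_im, Complex.add_im, Complex.mul_im]
    ring
  have hre2 : |D.re - ((n₁ - n₂ : ℤ):ℝ)| < 2*δ₂ := by
    rw [hDre, abs_lt]
    rw [abs_lt] at hn₁ hn₂
    push_cast
    constructor <;> linarith [hn₁.1, hn₁.2, hn₂.1, hn₂.2]
  have him2 : |D.im - ((m₁ - m₂ : ℤ):ℝ)| < 2*δ₂ := by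
    rw [hDim, abs_lt]
    rw [abs_lt] at hm₁ hm₂
    push_cast
    constructor <;> linarith [hm₁.1, hm₁.2, hm₂.1, hm₂.2]
  have habs_re : |D.re| ≤ r := Complex.abs_re_le_norm D
  have habs_im : |D.im| ≤ r := Complex.abs_im_le_norm D
  have hδ₂sm : δ₂ < 1/10^2 := by rw [hδ₂]; norm_num
  have hn0 : (n₁ - n₂ : ℤ) = 0 := by
    have h1 : |((n₁ - n₂ : ℤ):ℝ)| < 1 := by
      rw [abs_lt]
      rw [abs_lt] at hre2
      rw [abs_le] at habs_re
      constructor <;> linarith [hre2.1, hre2.2, habs_re.1, habs_re.2, key2]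
    have h2 : |(n₁ - n₂ : ℤ)| < 1 := by exact_mod_cast h1
    rw [abs_lt] at h2; omega
  have hm0 : (m₁ - m₂ : ℤ) = 0 := by
    have h1 : |((m₁ - m₂ : ℤ):ℝ)| < 1 := by
      rw [abs_lt]
      rw [abs_lt] at him2
      rw [abs_le] at habs_im
      constructor <;> linarith [him2.1, him2.2, habs_im.1, habs_im.2, key2]
    have h2 : |(m₁ - m₂ : ℤ)| < 1 := by exact_mod_cast h1
    rw [abs_lt] at h2; omega
  rw [hn0] at hre2
  rw [hm0] at him2
  simp at hre2 him2
  have hfinal : r ≤ |D.re| + |D.im| := Complex.norm_le_abs_re_add_abs_im D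
  rw [hδ₂] at hre2 him2
  linarith
end

section
/- Let δ₁, δ₂ > 0 with δ₁/δ₂ a positive integer and δ₁ < 1/2. Let k ∈ ℕ, ε > 0, and let f : (ℝ/ℤ)^m → (ℝ/ℤ)^k be a group homomorphism. If m > (δ₁/δ₂)·(⌈1/(δ₂ε)⌉ + 1)^{2k}, then there exists a tuple v ∈ (ℝ/ℤ)^m of the following form — one coordinate equal to −δ₁ mod 1, exactly δ₁/δ₂ other coordinates equal to δ₂ mod 1, and all remaining coordinates equal to 0 — such that every coordinate of f(v) has ℝ/ℤ-norm strictly less than ε. -/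
open Finset

theorem Sm_meets_every_bohr_set (δ₁ δ₂ : ℝ) (r : ℕ) (hr : 0 < r)
    (hδ₂ : 0 < δ₂) (hratio : δ₁ = r * δ₂) (hδ₁ : δ₁ < 1 / 2)
    (k m : ℕ) (ε : ℝ) (hε : 0 < ε)
    (f : (Fin m → AddCircle (1 : ℝ)) →+ (Fin k → AddCircle (1 : ℝ)))
    (hm : m > r * (⌈1 / (δ₂ * ε)⌉₊ + 1) ^ (2 * k)) :
    ∃ v : Fin m → AddCircle (1 : ℝ),
      (∃ (i : Fin m) (T : Finset (Fin m)), i ∉ T ∧ T.card = r ∧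
        v i = ((-δ₁ : ℝ) : AddCircle (1 : ℝ)) ∧
        (∀ j ∈ T, v j = ((δ₂ : ℝ) : AddCircle (1 : ℝ))) ∧
        (∀ j, j ≠ i → j ∉ T → v j = 0)) ∧
      ∀ i : Fin k, ‖f v i‖ < ε := by
  haveI : Fact ((0:ℝ) < 1) := ⟨one_pos⟩
  set N := ⌈1 / (δ₂ * ε)⌉₊ with hNdef
  have hδ₂ε : (0:ℝ) < δ₂ * ε := by positivity
  have hN : 0 < N := Nat.ceil_pos.2 (by positivity)
  have hNR : (0:ℝ) < N := by exact_mod_cast hN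
  -- representative of a point of the circle in [0,1)
  let rep : AddCircle (1:ℝ) → ℝ := fun x => ((AddCircle.equivIco 1 0 x : Set.Ico (0:ℝ) (0+1)) : ℝ)
  have hrep_mem : ∀ x, rep x ∈ Set.Ico (0:ℝ) (0+1) := fun x => (AddCircle.equivIco 1 0 x).2
  have hrep_eq : ∀ x, ((rep x : ℝ) : AddCircle (1:ℝ)) = x := fun x =>
    (AddCircle.equivIco 1 0).symm_apply_apply x
  -- the box map
  let box : AddCircle (1:ℝ) → Fin N := fun x =>
    ⟨⌊(N:ℝ) * rep x⌋₊, by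
      have h1 := (hrep_mem x).2
      have h0 := (hrep_mem x).1
      have h2 : (N:ℝ) * rep x < N := by nlinarith
      have h3 : (0:ℝ) ≤ (N:ℝ) * rep x := by positivity
      exact (Nat.floor_lt h3).2 h2⟩
  -- key estimate: same box ⟹ close
  have key : ∀ x y : AddCircle (1:ℝ), box x = box y → ‖x - y‖ < δ₂ * ε := by
    intro x y hxy
    have hfl : ⌊(N:ℝ) * rep x⌋₊ = ⌊(N:ℝ) * rep y⌋₊ := congrArg Fin.val hxy
    have hx0 : (0:ℝ) ≤ (N:ℝ) * rep x := by
      have := (hrep_mem x).1; positivity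
    have hy0 : (0:ℝ) ≤ (N:ℝ) * rep y := by
      have := (hrep_mem y).1; positivity
    have hcast : ((⌊(N:ℝ) * rep x⌋₊ : ℕ) : ℝ) = ((⌊(N:ℝ) * rep y⌋₊ : ℕ) : ℝ) := by
      exact_mod_cast congrArg (Nat.cast : ℕ → ℝ) hfl
    have h1 : |(N:ℝ) * rep x - (N:ℝ) * rep y| < 1 := by
      have hxu := Nat.lt_floor_add_one ((N:ℝ) * rep x)
      have hyu := Nat.lt_floor_add_one ((N:ℝ) * rep y)
      have hxl := Nat.floor_le hx0
      have hyl := Nat.floor_le hy0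
      rw [abs_lt]
      constructor <;> linarith
    have h2 : |rep x - rep y| < 1 / N := by
      rw [← mul_sub, abs_mul, abs_of_nonneg hNR.le] at h1
      rw [lt_div_iff₀' hNR]
      exact h1
    have h3 : (1:ℝ) / N ≤ δ₂ * ε := by
      have := Nat.le_ceil (1 / (δ₂ * ε))
      rw [div_le_iff₀ hNR, ← div_le_iff₀' hδ₂ε]
      exact this
    have h4 : x - y = ((rep x - rep y : ℝ) : AddCircle (1:ℝ)) := by
      rw [← hrep_eq x, ← hrep_eq y]
      push_cast
      rw [QuotientAddGroup.mk_sub]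
      simp [hrep_eq]
    calc ‖x - y‖ ≤ ‖rep x - rep y‖ := h4 ▸ QuotientAddGroup.norm_mk_le_norm
      _ = |rep x - rep y| := Real.norm_eq_abs _
      _ < 1 / N := h2
      _ ≤ δ₂ * ε := h3
  -- images of the generators
  let g : Fin m → Fin k → AddCircle (1:ℝ) :=
    fun j => f (Pi.single j ((δ₂ : ℝ) : AddCircle (1:ℝ)))
  let F : Fin m → (Fin k → Fin N) := fun j i => box (g j i)
  -- pigeonhole
  have hcard : Fintype.card (Fin k → Fin N) * r < Fintype.card (Fin m) := by
    simp only [Fintype.card_fun, Fintype.card_fin]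
    have h1 : N ^ k ≤ (N + 1) ^ (2 * k) :=
      le_trans (Nat.pow_le_pow_left (by omega) k) (Nat.pow_le_pow_right (by omega) (by omega))
    calc N ^ k * r ≤ (N + 1) ^ (2 * k) * r := Nat.mul_le_mul_right r h1
      _ = r * (N + 1) ^ (2 * k) := Nat.mul_comm _ _
      _ < m := hm
  obtain ⟨y, hy⟩ := Fintype.exists_lt_card_fiber_of_mul_lt_card F hcard
  obtain ⟨T', hT'sub, hT'card⟩ := Finset.exists_subset_card_eq hy
  have hfib : ∀ j ∈ T', F j = y := by
    intro j hj
    have := hT'sub hj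
    simp only [mem_filter] at this
    exact this.2
  obtain ⟨i, hi⟩ : T'.Nonempty := by rw [← Finset.card_pos, hT'card]; omega
  set T : Finset (Fin m) := T'.erase i with hT
  have hiT : i ∉ T := Finset.notMem_erase i T'
  have hTcard : T.card = r := by
    rw [hT, Finset.card_erase_of_mem hi, hT'card]
    omega
  have hTne : T.Nonempty := by rw [← Finset.card_pos, hTcard]; exact hr
  -- the witness
  set v : Fin m → AddCircle (1:ℝ) := fun j =>
    if j = i then ((-δ₁ : ℝ) : AddCircle (1:ℝ))
    else if j ∈ T then ((δ₂ : ℝ) : AddCircle (1:ℝ)) else 0 with hvdef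
  -- decomposition of v as a sum
  have hv : v = ∑ j ∈ T, (Pi.single j (((δ₂:ℝ)) : AddCircle (1:ℝ))
      - Pi.single i (((δ₂:ℝ)) : AddCircle (1:ℝ))) := by
    funext x
    rw [Finset.sum_apply]
    simp only [Pi.sub_apply, Pi.single_apply, Finset.sum_sub_distrib,
      Finset.sum_ite_eq, Finset.sum_const]
    by_cases hx : x = i
    · subst hx
      simp only [hvdef, if_pos rfl, if_neg hiT, hTcard, zero_sub, eq_self_iff_true, if_true]
      have hmk : ∀ a : ℝ, ((a : AddCircle (1:ℝ)))
          = QuotientAddGroup.mk' (AddSubgroup.zmultiples (1:ℝ)) a := fun a => rfl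
      rw [hmk, hratio, show ((r:ℝ) * δ₂) = (r : ℕ) • (δ₂:ℝ) by simp, map_neg, map_nsmul]
      rfl
    · by_cases hxT : x ∈ T
      · simp only [hvdef, if_neg hx, if_pos hxT, if_neg hx, hTcard]
        simp [hx]
      · simp only [hvdef, if_neg hx, if_neg hxT]
        simp [hx, hxT]
  refine ⟨v, ⟨i, T, hiT, hTcard, by simp [hvdef], ?_, ?_⟩, ?_⟩
  · intro j hj
    have hji : j ≠ i := fun h => hiT (h ▸ hj)
    simp [hvdef, hji, hj]
  · intro j hj1 hj2
    simp [hvdef, hj1, hj2]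
  · intro i'
    have hfv : f v i' = ∑ j ∈ T, (g j i' - g i i') := by
      rw [hv, map_sum, Finset.sum_apply]
      congr 1
      funext j
      rw [map_sub]
      simp [g]
    have hbox : ∀ j ∈ T, box (g j i') = box (g i i') := by
      intro j hj
      have h1 : F j = y := hfib j (Finset.mem_of_mem_erase hj)
      have h2 : F i = y := hfib i hi
      have := congrFun (h1.trans h2.symm) i'
      exact this
    calc ‖f v i'‖ = ‖∑ j ∈ T, (g j i' - g i i')‖ := by rw [hfv]
      _ ≤ ∑ j ∈ T, ‖g j i' - g i i'‖ := norm_sum_le _ _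
      _ < ∑ _j ∈ T, (δ₂ * ε) := by
          apply Finset.sum_lt_sum_of_nonempty hTne
          intro j hj
          exact key _ _ (hbox j hj)
      _ = r * (δ₂ * ε) := by rw [Finset.sum_const, hTcard, nsmul_eq_mul]
      _ = δ₁ * ε := by rw [hratio]; ring
      _ < 1 * ε := by
          apply mul_lt_mul_of_pos_right _ hε
          linarith
      _ = ε := one_mul ε
end
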